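/- Let (X,S,U,f) be a nontrivial splitting structure on a complete metric space X. Then for any ε₀ > 0 and any countable collection {K_i}_{i∈ℕ} of ε₀-Cantor-winning sets, the intersection ⋂_{i=1}^{∞} K_i is also ε₀-Cantor-winning. -/

import Mathlib

open scoped Classical
open Filter Set

/-- A closed (metric) ball in a metric space, recorded by its centre and its
(positive) radius. -/
structure SSBall (X : Type*) [MetricSpace X] where
  center : X
  radius : ℝ
  radius_pos : 0 < radius

namespace SSBall

variable {X : Type*} [MetricSpace X]

/-- The underlying set of points of a ball. -/
def toSet (B : SSBall X) : Set X := Metric.closedBall B.center B.radius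

end SSBall

/-- A splitting structure `(X, S, U, f)` on a metric space `X`:
`U ⊆ ℕ` is an infinite multiplicatively closed set of positive integers, closed under
division of its elements; `f` is completely multiplicative on `U`; and `S` splits every
closed ball `B` into `f u` closed sub-balls of radius `rad(B)/u` whose centres are
`2 rad(B)/u`-separated, compatibly with multiplication in `U`. -/
structure SplittingStructure (X : Type*) [MetricSpace X] where
  U : Set ℕ
  f : ℕ → ℕ
  S : SSBall X → ℕ → Finset (SSBall X)
  U_pos : ∀ u ∈ U, 0 < u
  U_infinite : U.Infinite
  mul_mem : ∀ u ∈ U, ∀ v ∈ U, u * v ∈ U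
  div_mem : ∀ u ∈ U, ∀ v ∈ U, u ∣ v → v / u ∈ U
  f_pos : ∀ u ∈ U, 0 < f u
  f_mul : ∀ u ∈ U, ∀ v ∈ U, f (u * v) = f u * f v
  S_subset : ∀ B : SSBall X, ∀ u ∈ U, ∀ b ∈ S B u, b.toSet ⊆ B.toSet
  S_radius : ∀ B : SSBall X, ∀ u ∈ U, ∀ b ∈ S B u, b.radius = B.radius / u
  S_card : ∀ B : SSBall X, ∀ u ∈ U, (S B u).card = f u
  S_sep : ∀ B : SSBall X, ∀ u ∈ U, ∀ b₁ ∈ S B u, ∀ b₂ ∈ S B u,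
    b₁ ≠ b₂ → 2 * B.radius / u ≤ dist b₁.center b₂.center
  S_comp : ∀ B : SSBall X, ∀ u ∈ U, ∀ v ∈ U,
    S B (u * v) = (S B u).biUnion fun b => S b v

namespace SplittingStructure

variable {X : Type*} [MetricSpace X]

/-- `A_u(B)`, the union of the balls of `S(B,u)`. -/
def Au (σ : SplittingStructure X) (B : SSBall X) (u : ℕ) : Set X :=
  ⋃ b ∈ σ.S B u, b.toSet

/-- The limit set `A_∞(B)`.  (For any sequence `(u_i)` in `U` with `u_i ∣ u_{i+1}` and
`u_i → ∞` the intersection `⋂_i A_{u_i}(B)` is independent of the sequence and coincides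
with the intersection of all the sets `A_u(B)`, `u ∈ U`.) -/
def Ainfty (σ : SplittingStructure X) (B : SSBall X) : Set X :=
  ⋂ u ∈ σ.U, σ.Au B u

/-- A splitting structure is nontrivial if `f` is not identically `1` on `U`. -/
def Nontrivial (σ : SplittingStructure X) : Prop := ∃ u ∈ σ.U, σ.f u ≠ 1

/-- `K` is a generalised `(B, ℛ, r)`-Cantor set for the splitting structure `σ`:
it arises from the iterative construction that starts with `𝓑 0 = {B}`, and in which
`𝓑 (n+1)` is obtained from the collection of candidate balls
`I_{n+1} = ⋃_{B' ∈ 𝓑 n} S(B', R n)` by removing, for each `k = 0, …, n` and each ball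
`B'' ∈ 𝓑 (n-k)`, at most `r (n-k) n` balls lying in `S(B'', R_{n-k} ⋯ R_n)`
(the balls removed at stage `k` form the collection `E k`). -/
def IsGenCantor (σ : SplittingStructure X) (B : SSBall X) (R : ℕ → ℕ)
    (r : ℕ → ℕ → ℝ) (K : Set X) : Prop :=
  ∃ 𝓑 : ℕ → Finset (SSBall X),
    𝓑 0 = {B} ∧
    (∀ n : ℕ, ∃ E : ℕ → Finset (SSBall X),
      (∀ k ≤ n, E k ⊆ (𝓑 (n - k)).biUnion fun B'' =>
          σ.S B'' (∏ i ∈ Finset.range (k + 1), R (n - i))) ∧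
      (∀ k ≤ n, ∀ B'' ∈ 𝓑 (n - k),
        ((E k ∩ σ.S B'' (∏ i ∈ Finset.range (k + 1), R (n - i))).card : ℝ)
          ≤ r (n - k) n) ∧
      𝓑 (n + 1) = ((𝓑 n).biUnion fun B' => σ.S B' (R n)) \
          (Finset.range (n + 1)).biUnion E) ∧
    K = ⋂ n, ⋃ b ∈ 𝓑 n, b.toSet

/-- `E` is `ε₀`-Cantor-winning on the ball `B` for the splitting structure `σ`. -/
def CantorWinningOn (σ : SplittingStructure X) (ε₀ : ℝ) (B : SSBall X)
    (E : Set X) : Prop :=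
  ∀ ε : ℝ, 0 < ε → ε < ε₀ → ∃ Rε ∈ σ.U, ∀ R ∈ σ.U, Rε ≤ R →
    ∃ K : Set X,
      σ.IsGenCantor B (fun _ => R)
        (fun m n => (σ.f R : ℝ) ^ (((n : ℝ) - (m : ℝ) + 1) * (1 - ε))) K ∧
      K ⊆ E

/-- `E` is `ε₀`-Cantor-winning for `σ` if it is `ε₀`-Cantor-winning on every ball. -/
def CantorWinning (σ : SplittingStructure X) (ε₀ : ℝ) (E : Set X) : Prop :=
  ∀ B : SSBall X, σ.CantorWinningOn ε₀ B E

end SplittingStructure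

/-- Condition (S4) with an explicit constant `C`: no closed ball of `X` intersects more
than `C` pairwise disjoint open balls of the same radius as itself. -/
def CondS4With (X : Type*) [MetricSpace X] (C : ℕ) : Prop :=
  ∀ (x : X) (ρ : ℝ), 0 < ρ → ∀ T : Finset X,
    (∀ y ∈ T, (Metric.ball y ρ ∩ Metric.closedBall x ρ).Nonempty) →
    (T : Set X).PairwiseDisjoint (fun y => Metric.ball y ρ) →
    T.card ≤ C

/-- Condition (S4). -/
def CondS4 (X : Type*) [MetricSpace X] : Prop := ∃ C : ℕ, CondS4With X C

/-- Condition (S5): for each `K > 1` there is a constant `C(K,X)` such that no ball of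
radius `K·ρ` intersects more than `C(K,X)` pairwise disjoint open balls of radius `ρ`. -/
def CondS5 (X : Type*) [MetricSpace X] : Prop :=
  ∀ K : ℝ, 1 < K → ∃ C : ℕ, ∀ (x : X) (ρ : ℝ), 0 < ρ → ∀ T : Finset X,
    (∀ y ∈ T, (Metric.ball y ρ ∩ Metric.closedBall x (K * ρ)).Nonempty) →
    (T : Set X).PairwiseDisjoint (fun y => Metric.ball y ρ) →
    T.card ≤ C

/-!
Fix `ε` and some `R ≥ 2` in `U`. For each `i` and each ball `B'` of level `2 ^ i` below `B`,
the winning property of `K i` on `B'` provides a generalised Cantor set (a "run") with parameter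
`R ^ t`, where `t = 2 ^ (i + 1) (R_ε(i, B') + 1)`. One step of a run is `t` steps with parameter
`R`, and its removal bounds `f(R ^ t) ^ ((k + 1)(1 - ε)) = f(R) ^ (t (k + 1)(1 - ε))` are exactly
those allowed with parameter `R`. All runs are interleaved into one construction with parameter
`R`: step `m` of the run for `i` at `B'` is carried out at level `2 ^ i + t (m + 1)`. As
`2 ^ (i + 1) ∣ t`, the level determines `i`, and the ancestor of level `2 ^ i` determines `B'`, so
at each stage every ball meets the removals of at most one run. Finally a pigeonhole argument over
the finitely many balls of level `2 ^ i` puts the limit set inside the limit set of one run for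
each `i`, hence inside `K i`.
-/

theorem Finset.exists_forall_of_antitone {α : Type*} (s : Finset α) {P : α → ℕ → Prop}
    (hP : ∀ a ∈ s, Antitone (P a)) (h : ∀ ℓ, ∃ a ∈ s, P a ℓ) : ∃ a ∈ s, ∀ ℓ, P a ℓ := by
  by_contra! hne
  have : ∀ᶠ ℓ in atTop, ∀ a ∈ s, ¬ P a ℓ := by
    rw [Filter.eventually_all_finset]
    intro a ha
    obtain ⟨ℓ₀, hℓ₀⟩ := hne a ha
    exact Filter.eventually_atTop.2 ⟨ℓ₀, fun ℓ hℓ hPℓ => hℓ₀ (hP a ha hℓ hPℓ)⟩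
  obtain ⟨ℓ, hℓ⟩ := this.exists
  obtain ⟨a, ha, hPa⟩ := h ℓ
  exact hℓ a ha hPa

theorem eq_of_two_pow_add_eq {i j a b : ℕ} (ha : 2 ^ (i + 1) ∣ a) (hb : 2 ^ (j + 1) ∣ b)
    (h : 2 ^ i + a = 2 ^ j + b) : i = j := by
  by_contra hne
  wlog hij : i < j generalizing i j a b
  · exact this hb ha h.symm (Ne.symm hne) (by omega)
  have : 2 ^ (i + 1) ∣ 2 ^ i := by
    rw [← Nat.dvd_add_left ha, h]
    exact dvd_add (pow_dvd_pow 2 hij) ((pow_dvd_pow 2 (by omega)).trans hb)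
  exact absurd ((Nat.pow_dvd_pow_iff_le_right (by norm_num)).1 this) (by omega)

namespace SplittingStructure

variable {X : Type*} [MetricSpace X] (σ : SplittingStructure X)

theorem one_mem : 1 ∈ σ.U := by
  obtain ⟨u, hu⟩ := σ.U_infinite.nonempty
  simpa [Nat.div_self (σ.U_pos u hu)] using σ.div_mem u hu u hu dvd_rfl

theorem pow_mem {R : ℕ} (hR : R ∈ σ.U) : ∀ n : ℕ, R ^ n ∈ σ.U
  | 0 => by simpa using σ.one_mem
  | n + 1 => by rw [pow_succ]; exact σ.mul_mem _ (pow_mem hR n) _ hR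

theorem f_one : σ.f 1 = 1 := by
  have h := σ.f_mul 1 σ.one_mem 1 σ.one_mem
  have h₀ := σ.f_pos 1 σ.one_mem
  rw [mul_one] at h
  nlinarith

theorem f_pow {R : ℕ} (hR : R ∈ σ.U) : ∀ n : ℕ, σ.f (R ^ n) = σ.f R ^ n
  | 0 => by simpa using σ.f_one
  | n + 1 => by rw [pow_succ, σ.f_mul _ (σ.pow_mem hR n) _ hR, f_pow hR n, pow_succ]

theorem exists_two_le_mem : ∃ u ∈ σ.U, 2 ≤ u := by
  obtain ⟨u, hu, hu01⟩ := σ.U_infinite.exists_notMem_finset {0, 1}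
  refine ⟨u, hu, ?_⟩
  simp only [Finset.mem_insert, Finset.mem_singleton] at hu01
  omega

/-- The splitting of `C` at `u * v` has exactly `f u * f v` balls, so the splittings at `v`
of the balls of `S(C, u)` cannot overlap. -/
theorem eq_of_mem_S_of_mem_S {u v : ℕ} (hu : u ∈ σ.U) (hv : v ∈ σ.U) {C a₁ a₂ b : SSBall X}
    (h₁ : a₁ ∈ σ.S C u) (h₂ : a₂ ∈ σ.S C u) (hb₁ : b ∈ σ.S a₁ v) (hb₂ : b ∈ σ.S a₂ v) :
    a₁ = a₂ := by
  by_contra hne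
  set rest := ((σ.S C u).erase a₁).biUnion fun a => σ.S a v
  have hsplit : σ.S C (u * v) = σ.S a₁ v ∪ rest := by
    rw [σ.S_comp C u hu v hv, ← Finset.insert_erase h₁, Finset.biUnion_insert]
  have hrest : rest.card ≤ (σ.f u - 1) * σ.f v := by
    have := Finset.card_biUnion_le_card_mul ((σ.S C u).erase a₁) (fun a => σ.S a v) (σ.f v)
      fun a _ => (σ.S_card a v hv).le
    rwa [Finset.card_erase_of_mem h₁, σ.S_card C u hu] at this
  have hinter : 1 ≤ (σ.S a₁ v ∩ rest).card :=
    Finset.card_pos.2 ⟨b, Finset.mem_inter.2 ⟨hb₁,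
      Finset.mem_biUnion.2 ⟨a₂, Finset.mem_erase.2 ⟨Ne.symm hne, h₂⟩, hb₂⟩⟩⟩
  have hcount := Finset.card_union_add_card_inter (σ.S a₁ v) rest
  rw [← hsplit, σ.S_card _ _ (σ.mul_mem u hu v hv), σ.f_mul u hu v hv, σ.S_card a₁ v hv]
    at hcount
  have hfu := σ.f_pos u hu
  have : (σ.f u - 1) * σ.f v + σ.f v = σ.f u * σ.f v := by
    rw [← Nat.succ_mul, Nat.succ_eq_add_one, Nat.sub_add_cancel hfu]
  omega

/-- Generation `0` is `{a}` itself: `S(a, 1)` is a single ball of the radius of `a`, but not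
necessarily `a`. -/
noncomputable def descendants (R : ℕ) (a : SSBall X) (p : ℕ) : Finset (SSBall X) :=
  if p = 0 then {a} else σ.S a (R ^ p)

variable {σ} {R : ℕ}

@[simp]
theorem descendants_zero (a : SSBall X) : σ.descendants R a 0 = {a} := if_pos rfl

theorem descendants_of_ne_zero (a : SSBall X) {p : ℕ} (hp : p ≠ 0) :
    σ.descendants R a p = σ.S a (R ^ p) := if_neg hp

theorem descendants_one (a : SSBall X) : σ.descendants R a 1 = σ.S a R := by
  rw [descendants_of_ne_zero a one_ne_zero, pow_one]

theorem descendants_pow {t : ℕ} (ht : t ≠ 0) (a : SSBall X) (m : ℕ) :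
    σ.descendants (R ^ t) a m = σ.descendants R a (t * m) := by
  rcases eq_or_ne m 0 with rfl | hm
  · simp
  · rw [descendants_of_ne_zero a hm, descendants_of_ne_zero a (mul_ne_zero ht hm), pow_mul]

theorem descendants_add (hR : R ∈ σ.U) (a : SSBall X) (p q : ℕ) :
    σ.descendants R a (p + q) = (σ.descendants R a p).biUnion (σ.descendants R · q) := by
  rcases eq_or_ne p 0 with rfl | hp
  · simp
  rcases eq_or_ne q 0 with rfl | hq
  · simp only [descendants_zero, add_zero]
    exact (Finset.biUnion_singleton_eq_self).symm
  rw [descendants_of_ne_zero a hp, descendants_of_ne_zero a (by omega), pow_add,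
    σ.S_comp a _ (σ.pow_mem hR p) _ (σ.pow_mem hR q)]
  exact Finset.biUnion_congr rfl fun b _ => (descendants_of_ne_zero b hq).symm

theorem mem_descendants_add (hR : R ∈ σ.U) {a b c : SSBall X} {p q : ℕ}
    (hb : b ∈ σ.descendants R a p) (hc : c ∈ σ.descendants R b q) :
    c ∈ σ.descendants R a (p + q) := by
  rw [descendants_add hR]
  exact Finset.mem_biUnion.2 ⟨b, hb, hc⟩

theorem exists_mem_descendants_of_mem_add (hR : R ∈ σ.U) {a c : SSBall X} {p q : ℕ}
    (hc : c ∈ σ.descendants R a (p + q)) : ∃ b ∈ σ.descendants R a p, c ∈ σ.descendants R b q :=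
  Finset.mem_biUnion.1 (descendants_add hR a p q ▸ hc)

theorem toSet_subset_of_mem_descendants (hR : R ∈ σ.U) {a b : SSBall X} {p : ℕ}
    (hb : b ∈ σ.descendants R a p) : b.toSet ⊆ a.toSet := by
  rcases eq_or_ne p 0 with rfl | hp
  · rw [descendants_zero, Finset.mem_singleton] at hb
    rw [hb]
  · rw [descendants_of_ne_zero a hp] at hb
    exact σ.S_subset a _ (σ.pow_mem hR p) b hb

theorem eq_of_mem_descendants (hR : R ∈ σ.U) {C a₁ a₂ b : SSBall X} {p q : ℕ}
    (h₁ : a₁ ∈ σ.descendants R C p) (h₂ : a₂ ∈ σ.descendants R C p)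
    (hb₁ : b ∈ σ.descendants R a₁ q) (hb₂ : b ∈ σ.descendants R a₂ q) : a₁ = a₂ := by
  rcases eq_or_ne p 0 with rfl | hp
  · rw [descendants_zero, Finset.mem_singleton] at h₁ h₂
    rw [h₁, h₂]
  rcases eq_or_ne q 0 with rfl | hq
  · rw [descendants_zero, Finset.mem_singleton] at hb₁ hb₂
    rw [← hb₁, ← hb₂]
  rw [descendants_of_ne_zero _ hp] at h₁ h₂
  rw [descendants_of_ne_zero _ hq] at hb₁ hb₂
  exact σ.eq_of_mem_S_of_mem_S (σ.pow_mem hR p) (σ.pow_mem hR q) h₁ h₂ hb₁ hb₂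

theorem mem_descendants_of_mem_descendants_add (hR : R ∈ σ.U) {B a' a c : SSBall X}
    {j p q : ℕ} (ha' : a' ∈ σ.descendants R B j) (ha : a ∈ σ.descendants R B (j + p))
    (hca' : c ∈ σ.descendants R a' (p + q)) (hca : c ∈ σ.descendants R a q) :
    a ∈ σ.descendants R a' p := by
  obtain ⟨b, hb, hcb⟩ := exists_mem_descendants_of_mem_add hR hca'
  rwa [eq_of_mem_descendants hR ha (mem_descendants_add hR ha' hb) hca hcb]

theorem exists_mem_descendants_of_succ_subset (hR : R ∈ σ.U) {s : ℕ → Finset (SSBall X)}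
    (hs : ∀ n, s (n + 1) ⊆ (s n).biUnion (σ.S · R)) (n : ℕ) :
    ∀ p, ∀ c ∈ s (n + p), ∃ a ∈ s n, c ∈ σ.descendants R a p
  | 0, c, hc => ⟨c, hc, by simp⟩
  | p + 1, c, hc => by
    obtain ⟨b, hb, hcb⟩ := Finset.mem_biUnion.1 (hs (n + p) hc)
    obtain ⟨a, ha, hba⟩ := exists_mem_descendants_of_succ_subset hR hs n p b hb
    exact ⟨a, ha, mem_descendants_add hR hba (by rwa [descendants_one])⟩

theorem subset_descendants_of_succ_subset (hR : R ∈ σ.U) {s : ℕ → Finset (SSBall X)}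
    (hs : ∀ n, s (n + 1) ⊆ (s n).biUnion (σ.S · R)) {B : SSBall X} (h₀ : s 0 = {B}) (n : ℕ) :
    s n ⊆ σ.descendants R B n := by
  intro c hc
  obtain ⟨a, ha, hca⟩ := exists_mem_descendants_of_succ_subset hR hs 0 n c (by rwa [zero_add])
  rw [h₀, Finset.mem_singleton] at ha
  rwa [← ha]

theorem biUnion_S_subset_of_succ_subset (hR : R ∈ σ.U) {s : ℕ → Finset (SSBall X)}
    (hs : ∀ n, s (n + 1) ⊆ (s n).biUnion (σ.S · R)) {n k : ℕ} (hk : k ≤ n) :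
    (s n).biUnion (σ.S · R) ⊆ (s (n - k)).biUnion (σ.S · (R ^ (k + 1))) := by
  intro x hx
  obtain ⟨b, hb, hxb⟩ := Finset.mem_biUnion.1 hx
  obtain ⟨a, ha, hba⟩ := exists_mem_descendants_of_succ_subset hR hs (n - k) k b
    (by rwa [Nat.sub_add_cancel hk])
  have := mem_descendants_add hR hba (by rwa [descendants_one])
  exact Finset.mem_biUnion.2 ⟨a, ha, by rwa [descendants_of_ne_zero a (by omega)] at this⟩

/-- The data of a generalised `(B, R, r)`-Cantor set with constant parameter `R`, the bound
`r (n - k) n` being written `bound (k + 1)`; `removed n` is the family `E` of step `n`. -/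
structure CantorScheme (σ : SplittingStructure X) (B : SSBall X) (R : ℕ) (bound : ℕ → ℝ) where
  balls : ℕ → Finset (SSBall X)
  removed : ℕ → ℕ → Finset (SSBall X)
  balls_zero : balls 0 = {B}
  removed_subset : ∀ n, ∀ k ≤ n, removed n k ⊆ (balls (n - k)).biUnion (σ.S · (R ^ (k + 1)))
  card_removed_le : ∀ n, ∀ k ≤ n, ∀ b ∈ balls (n - k),
    ((removed n k ∩ σ.S b (R ^ (k + 1))).card : ℝ) ≤ bound (k + 1)
  balls_succ : ∀ n, balls (n + 1) =
    (balls n).biUnion (σ.S · R) \ (Finset.range (n + 1)).biUnion (removed n)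

namespace CantorScheme

variable {B : SSBall X} {bound : ℕ → ℝ}

def limit (C : σ.CantorScheme B R bound) : Set X := ⋂ n, ⋃ b ∈ C.balls n, b.toSet

theorem balls_succ_subset (C : σ.CantorScheme B R bound) (n : ℕ) :
    C.balls (n + 1) ⊆ (C.balls n).biUnion (σ.S · R) :=
  C.balls_succ n ▸ Finset.sdiff_subset

theorem balls_subset_descendants (hR : R ∈ σ.U) (C : σ.CantorScheme B R bound) (n : ℕ) :
    C.balls n ⊆ σ.descendants R B n :=
  subset_descendants_of_succ_subset hR C.balls_succ_subset C.balls_zero n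

theorem isGenCantor (C : σ.CantorScheme B R bound) {r : ℕ → ℕ → ℝ}
    (hr : ∀ n, ∀ k ≤ n, bound (k + 1) ≤ r (n - k) n) :
    σ.IsGenCantor B (fun _ => R) r C.limit := by
  refine ⟨C.balls, C.balls_zero, fun n => ⟨C.removed n, fun k hk => ?_, fun k hk b hb => ?_,
    C.balls_succ n⟩, rfl⟩
  · simpa only [Finset.prod_const, Finset.card_range] using C.removed_subset n k hk
  · simpa only [Finset.prod_const, Finset.card_range] using
      (C.card_removed_le n k hk b hb).trans (hr n k hk)

end CantorScheme

theorem IsGenCantor.exists_cantorScheme {B : SSBall X} {bound : ℕ → ℝ} {r : ℕ → ℕ → ℝ}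
    {K : Set X} (h : σ.IsGenCantor B (fun _ => R) r K)
    (hr : ∀ n, ∀ k ≤ n, r (n - k) n ≤ bound (k + 1)) :
    ∃ C : σ.CantorScheme B R bound, C.limit = K := by
  obtain ⟨𝓑, h𝓑₀, hstep, rfl⟩ := h
  choose E hEsub hEcard hEsucc using hstep
  refine ⟨⟨𝓑, E, h𝓑₀, fun n k hk => ?_, fun n k hk b hb => ?_, hEsucc⟩, rfl⟩
  · simpa only [Finset.prod_const, Finset.card_range] using hEsub n k hk
  · simpa only [Finset.prod_const, Finset.card_range] using
      (hEcard n k hk b hb).trans (hr n k hk)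

namespace CantorScheme

variable {t : ℕ → SSBall X → ℕ} {ψ : ℕ → SSBall X → ℕ → ℝ}

section Interleave

variable (B : SSBall X) (run : ∀ i B', σ.CantorScheme B' (R ^ t i B') (ψ i B'))

/-- Step `m` of the run for the index `i` started at a ball `B'` of level `2 ^ i` is performed
at level `2 ^ i + t i B' * (m + 1)`; its removal with gap `k' + 1` becomes a removal with gap
`t i B' * (k' + 1)`. When `2 ^ (i + 1) ∣ t i B'` the level determines `i`, and the ball `B'`
is then the ancestor of the balls concerned. -/
noncomputable def scheduledRemoval (n k : ℕ) : Finset (SSBall X) :=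
  (Finset.range (n + 1)).biUnion fun i => (σ.descendants R B (2 ^ i)).biUnion fun B' =>
    (Finset.range (n + 1)).biUnion fun m => (Finset.range (m + 1)).biUnion fun k' =>
      if n + 1 = 2 ^ i + t i B' * (m + 1) ∧ k + 1 = t i B' * (k' + 1) then
        (run i B').removed m k'
      else ∅

noncomputable def interleaveBalls : ℕ → Finset (SSBall X)
  | 0 => {B}
  | n + 1 => (interleaveBalls n).biUnion (σ.S · R) \ (Finset.range (n + 1)).biUnion fun k =>
      (interleaveBalls n).biUnion (σ.S · R) ∩ scheduledRemoval B run n k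

variable {B run}

theorem mem_scheduledRemoval (ht : ∀ i B', t i B' ≠ 0) {n k : ℕ} {x : SSBall X} :
    x ∈ scheduledRemoval B run n k ↔ ∃ i, ∃ B' ∈ σ.descendants R B (2 ^ i), ∃ m, ∃ k' ≤ m,
      n + 1 = 2 ^ i + t i B' * (m + 1) ∧ k + 1 = t i B' * (k' + 1) ∧
        x ∈ (run i B').removed m k' := by
  simp only [scheduledRemoval, Finset.mem_biUnion, Finset.mem_range]
  constructor
  · rintro ⟨i, -, B', hB', m, -, k', hk', hx⟩
    split_ifs at hx with h
    · exact ⟨i, B', hB', m, k', by omega, h.1, h.2, hx⟩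
    · exact absurd hx (Finset.notMem_empty x)
  · rintro ⟨i, B', hB', m, k', hk', hn, hk, hx⟩
    have hi : i < 2 ^ i := Nat.lt_two_pow_self
    have hm : m + 1 ≤ t i B' * (m + 1) := Nat.le_mul_of_pos_left _ (Nat.pos_of_ne_zero (ht i B'))
    exact ⟨i, by omega, B', hB', m, by omega, k', by omega, by rw [if_pos ⟨hn, hk⟩]; exact hx⟩

theorem interleaveBalls_succ_subset (n : ℕ) :
    interleaveBalls B run (n + 1) ⊆ (interleaveBalls B run n).biUnion (σ.S · R) :=
  Finset.sdiff_subset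

theorem exists_run_of_mem_scheduledRemoval (hR : R ∈ σ.U) (ht : ∀ i B', t i B' ≠ 0)
    {n k : ℕ} (hk : k ≤ n) {B'' x : SSBall X} (hB'' : B'' ∈ σ.descendants R B (n - k))
    (hx : x ∈ scheduledRemoval B run n k) (hxB'' : x ∈ σ.S B'' (R ^ (k + 1))) :
    ∃ i, ∃ B' ∈ σ.descendants R B (2 ^ i), ∃ m, ∃ k' ≤ m,
      n + 1 = 2 ^ i + t i B' * (m + 1) ∧ k + 1 = t i B' * (k' + 1) ∧
        x ∈ (run i B').removed m k' ∧ B'' ∈ (run i B').balls (m - k') := by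
  obtain ⟨i, B', hB', m, k', hk', hn, hkk, hxE⟩ := (mem_scheduledRemoval ht).1 hx
  refine ⟨i, B', hB', m, k', hk', hn, hkk, hxE, ?_⟩
  obtain ⟨c, hc, hxc⟩ := Finset.mem_biUnion.1 ((run i B').removed_subset m k' hk' hxE)
  have hcB' : c ∈ σ.descendants R B' (t i B' * (m - k')) := by
    rw [← descendants_pow (ht i B')]
    exact (run i B').balls_subset_descendants (σ.pow_mem hR _) _ hc
  have hlevel : n - k = 2 ^ i + t i B' * (m - k') := by
    have : t i B' * (m + 1) = t i B' * (m - k') + t i B' * (k' + 1) := by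
      rw [← mul_add]; congr 1; omega
    omega
  have hgap : k + 1 ≠ 0 := by omega
  rw [← pow_mul, ← hkk, ← descendants_of_ne_zero c hgap] at hxc
  rw [← descendants_of_ne_zero B'' hgap] at hxB''
  rw [hlevel] at hB''
  rwa [eq_of_mem_descendants hR (mem_descendants_add hR hB' hcB') hB'' hxc hxB''] at hc

theorem eq_of_mem_balls_run (hR : R ∈ σ.U) (ht : ∀ i B', t i B' ≠ 0)
    (ht₂ : ∀ i B', 2 ^ (i + 1) ∣ t i B') {n i j m m₁ k' k₁ : ℕ} {B' B₁ B'' : SSBall X}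
    (hB' : B' ∈ σ.descendants R B (2 ^ i)) (hB₁ : B₁ ∈ σ.descendants R B (2 ^ j))
    (hk' : k' ≤ m) (hk₁ : k₁ ≤ m₁) (hn : n + 1 = 2 ^ i + t i B' * (m + 1))
    (hn₁ : n + 1 = 2 ^ j + t j B₁ * (m₁ + 1)) (hgap : t i B' * (k' + 1) = t j B₁ * (k₁ + 1))
    (h : B'' ∈ (run i B').balls (m - k')) (h₁ : B'' ∈ (run j B₁).balls (m₁ - k₁)) :
    i = j ∧ B' = B₁ ∧ m = m₁ ∧ k' = k₁ := by
  obtain rfl : i = j :=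
    eq_of_two_pow_add_eq ((ht₂ i B').mul_right _) ((ht₂ j B₁).mul_right _) (hn.symm.trans hn₁)
  have hdesc : ∀ {B₀ m₀ k₀}, k₀ ≤ m₀ → B'' ∈ (run i B₀).balls (m₀ - k₀) →
      B'' ∈ σ.descendants R B₀ (t i B₀ * (m₀ + 1) - t i B₀ * (k₀ + 1)) := by
    intro B₀ m₀ k₀ hk₀ h₀
    rw [← Nat.mul_sub, show m₀ + 1 - (k₀ + 1) = m₀ - k₀ by omega, ← descendants_pow (ht i B₀)]
    exact (run i B₀).balls_subset_descendants (σ.pow_mem hR _) _ h₀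
  have hsame : t i B' * (m + 1) = t i B₁ * (m₁ + 1) := by omega
  obtain rfl : B' = B₁ := eq_of_mem_descendants hR hB' hB₁ (hdesc hk' h)
    (by rw [hsame, hgap]; exact hdesc hk₁ h₁)
  have htpos := Nat.pos_of_ne_zero (ht i B')
  exact ⟨rfl, rfl, by simpa using Nat.eq_of_mul_eq_mul_left htpos hsame,
    by simpa using Nat.eq_of_mul_eq_mul_left htpos hgap⟩

theorem card_scheduledRemoval_inter_le (hR : R ∈ σ.U) (ht : ∀ i B', t i B' ≠ 0)
    (ht₂ : ∀ i B', 2 ^ (i + 1) ∣ t i B') {φ : ℕ → ℝ} (hψ : ∀ i B' j, ψ i B' j ≤ φ (t i B' * j))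
    (hφ : ∀ j, 0 ≤ φ j) {n k : ℕ} (hk : k ≤ n) {B'' : SSBall X}
    (hB'' : B'' ∈ σ.descendants R B (n - k)) :
    ((scheduledRemoval B run n k ∩ σ.S B'' (R ^ (k + 1))).card : ℝ) ≤ φ (k + 1) := by
  rcases (scheduledRemoval B run n k ∩ σ.S B'' (R ^ (k + 1))).eq_empty_or_nonempty
    with hempty | ⟨x₀, hx₀⟩
  · simpa [hempty] using hφ (k + 1)
  obtain ⟨i, B', hB', m, k', hk', hn, hkk, -, hrun⟩ :=
    exists_run_of_mem_scheduledRemoval hR ht hk hB'' (Finset.mem_inter.1 hx₀).1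
      (Finset.mem_inter.1 hx₀).2
  have hsub : scheduledRemoval B run n k ∩ σ.S B'' (R ^ (k + 1)) ⊆
      (run i B').removed m k' ∩ σ.S B'' ((R ^ t i B') ^ (k' + 1)) := by
    intro x hx
    obtain ⟨hxD, hxS⟩ := Finset.mem_inter.1 hx
    obtain ⟨j, B₁, hB₁, m₁, k₁, hk₁, hn₁, hkk₁, hxE, hrun₁⟩ :=
      exists_run_of_mem_scheduledRemoval hR ht hk hB'' hxD hxS
    obtain ⟨rfl, rfl, rfl, rfl⟩ :=
      eq_of_mem_balls_run hR ht ht₂ hB' hB₁ hk' hk₁ hn hn₁ (hkk.symm.trans hkk₁) hrun hrun₁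
    rw [← pow_mul, ← hkk]
    exact Finset.mem_inter.2 ⟨hxE, hxS⟩
  calc ((scheduledRemoval B run n k ∩ σ.S B'' (R ^ (k + 1))).card : ℝ)
      ≤ ((run i B').removed m k' ∩ σ.S B'' ((R ^ t i B') ^ (k' + 1))).card :=
        Nat.cast_le.2 (Finset.card_le_card hsub)
    _ ≤ ψ i B' (k' + 1) := (run i B').card_removed_le m k' hk' B'' hrun
    _ ≤ φ (k + 1) := hkk ▸ hψ i B' (k' + 1)

theorem interleaveBalls_subset_descendants (hR : R ∈ σ.U) (n : ℕ) :
    interleaveBalls B run n ⊆ σ.descendants R B n :=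
  subset_descendants_of_succ_subset hR interleaveBalls_succ_subset rfl n

noncomputable def interleave (hR : R ∈ σ.U) (ht : ∀ i B', t i B' ≠ 0)
    (ht₂ : ∀ i B', 2 ^ (i + 1) ∣ t i B') {φ : ℕ → ℝ} (hψ : ∀ i B' j, ψ i B' j ≤ φ (t i B' * j))
    (hφ : ∀ j, 0 ≤ φ j) : σ.CantorScheme B R φ where
  balls := interleaveBalls B run
  removed n k := (interleaveBalls B run n).biUnion (σ.S · R) ∩ scheduledRemoval B run n k
  balls_zero := rfl
  removed_subset _ _ hk := Finset.inter_subset_left.trans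
    (biUnion_S_subset_of_succ_subset hR interleaveBalls_succ_subset hk)
  card_removed_le _ _ hk _ hb := by
    refine le_trans (Nat.cast_le.2 (Finset.card_le_card ?_))
      (card_scheduledRemoval_inter_le (run := run) hR ht ht₂ hψ hφ hk
        (interleaveBalls_subset_descendants hR _ hb))
    exact Finset.inter_subset_inter_right Finset.inter_subset_right
  balls_succ _ := rfl

theorem notMem_removed_of_mem_interleaveBalls (ht : ∀ i B', t i B' ≠ 0) {i : ℕ}
    {B' : SSBall X} (hB' : B' ∈ σ.descendants R B (2 ^ i)) {m k' : ℕ} (hk' : k' ≤ m)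
    {b : SSBall X} (hb : b ∈ interleaveBalls B run (2 ^ i + t i B' * (m + 1))) :
    b ∉ (run i B').removed m k' := by
  intro hbE
  obtain ⟨n, hn⟩ : ∃ n, 2 ^ i + t i B' * (m + 1) = n + 1 :=
    ⟨_, (Nat.succ_pred_eq_of_pos (Nat.add_pos_left (Nat.two_pow_pos i) _)).symm⟩
  have hgap : t i B' * (k' + 1) ≤ t i B' * (m + 1) := Nat.mul_le_mul_left _ (by omega)
  have hlevel : t i B' * (m + 1) ≤ n + 1 := hn ▸ Nat.le_add_left _ _
  obtain ⟨k, hk⟩ := Nat.exists_eq_add_one_of_ne_zero (mul_ne_zero (ht i B') (by omega : k' + 1 ≠ 0))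
  rw [hn] at hb
  refine (Finset.mem_sdiff.1 hb).2 (Finset.mem_biUnion.2 ⟨k, Finset.mem_range.2 (by omega),
    Finset.mem_inter.2 ⟨(Finset.mem_sdiff.1 hb).1,
      (mem_scheduledRemoval ht).2 ⟨i, B', hB', m, k', hk', hn.symm, hk.symm, hbE⟩⟩⟩)

theorem mem_balls_of_mem_interleaveBalls (hR : R ∈ σ.U) (ht : ∀ i B', t i B' ≠ 0) {i : ℕ}
    {B' : SSBall X} (hB' : B' ∈ σ.descendants R B (2 ^ i)) :
    ∀ m, ∀ b ∈ interleaveBalls B run (2 ^ i + t i B' * m),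
      b ∈ σ.descendants R B' (t i B' * m) → b ∈ (run i B').balls m
  | 0, b, _, hbB' => by
    rw [mul_zero, descendants_zero] at hbB'
    rw [(run i B').balls_zero]
    exact hbB'
  | m + 1, b, hb, hbB' => by
    have hb' := hb
    rw [mul_add_one, ← add_assoc] at hb'
    rw [mul_add_one] at hbB'
    obtain ⟨a, ha, hba⟩ :=
      exists_mem_descendants_of_succ_subset hR interleaveBalls_succ_subset _ _ b hb'
    have hrun := mem_balls_of_mem_interleaveBalls hR ht hB' m a ha
      (mem_descendants_of_mem_descendants_add hR hB' (interleaveBalls_subset_descendants hR _ ha)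
        hbB' hba)
    rw [descendants_of_ne_zero a (ht i B')] at hba
    rw [(run i B').balls_succ m]
    refine Finset.mem_sdiff.2 ⟨Finset.mem_biUnion.2 ⟨a, hrun, hba⟩, fun hrem => ?_⟩
    obtain ⟨k', hk', hbE⟩ := Finset.mem_biUnion.1 hrem
    exact notMem_removed_of_mem_interleaveBalls ht hB' (Nat.lt_succ_iff.1 (Finset.mem_range.1 hk'))
      hb hbE

theorem iInter_interleaveBalls_subset (hR : R ∈ σ.U) (ht : ∀ i B', t i B' ≠ 0) (i : ℕ) :
    ⋂ n, ⋃ b ∈ interleaveBalls B run n, b.toSet ⊆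
      ⋃ B' ∈ σ.descendants R B (2 ^ i), (run i B').limit := by
  intro x hx
  have hxn : ∀ n, ∃ b ∈ interleaveBalls B run n, x ∈ b.toSet := fun n => by
    simpa using Set.mem_iInter.1 hx n
  let P : SSBall X → ℕ → Prop := fun B' ℓ =>
    ∃ c ∈ interleaveBalls B run (2 ^ i + ℓ), c ∈ σ.descendants R B' ℓ ∧ x ∈ c.toSet
  have hP : ∀ ℓ, ∃ B' ∈ σ.descendants R B (2 ^ i), P B' ℓ := by
    intro ℓ
    obtain ⟨c, hc, hxc⟩ := hxn (2 ^ i + ℓ)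
    obtain ⟨B', hB', hcB'⟩ :=
      exists_mem_descendants_of_succ_subset hR interleaveBalls_succ_subset _ _ c hc
    exact ⟨B', interleaveBalls_subset_descendants hR _ hB', c, hc, hcB', hxc⟩
  have hanti : ∀ B' ∈ σ.descendants R B (2 ^ i), Antitone (P B') := by
    rintro B' hB' ℓ ℓ' hℓ ⟨c, hc, hcB', hxc⟩
    obtain ⟨p, rfl⟩ := Nat.exists_eq_add_of_le hℓ
    rw [← add_assoc] at hc
    obtain ⟨a, ha, hca⟩ :=
      exists_mem_descendants_of_succ_subset hR interleaveBalls_succ_subset _ _ c hc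
    exact ⟨a, ha, mem_descendants_of_mem_descendants_add hR hB'
      (interleaveBalls_subset_descendants hR _ ha) hcB' hca,
      toSet_subset_of_mem_descendants hR hca hxc⟩
  obtain ⟨B', hB', hPB'⟩ := (σ.descendants R B (2 ^ i)).exists_forall_of_antitone hanti hP
  refine Set.mem_iUnion₂.2 ⟨B', hB', Set.mem_iInter.2 fun m => ?_⟩
  obtain ⟨c, hc, hcB', hxc⟩ := hPB' (t i B' * m)
  exact Set.mem_iUnion₂.2 ⟨c, mem_balls_of_mem_interleaveBalls hR ht hB' m c hc hcB', hxc⟩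

end Interleave

theorem exists_limit_subset_iUnion_limit (hR : R ∈ σ.U) (ht : ∀ i B', t i B' ≠ 0)
    (ht₂ : ∀ i B', 2 ^ (i + 1) ∣ t i B') (B : SSBall X)
    (run : ∀ i B', σ.CantorScheme B' (R ^ t i B') (ψ i B')) {φ : ℕ → ℝ}
    (hψ : ∀ i B' j, ψ i B' j ≤ φ (t i B' * j)) (hφ : ∀ j, 0 ≤ φ j) :
    ∃ C : σ.CantorScheme B R φ, ∀ i, C.limit ⊆ ⋃ B' ∈ σ.descendants R B (2 ^ i), (run i B').limit :=
  ⟨interleave hR ht ht₂ hψ hφ, iInter_interleaveBalls_subset hR ht⟩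

end CantorScheme

/-- The bound `r_{n-k,n} = f(R) ^ ((k + 1)(1 - ε))` of the definition of Cantor-winning sets,
as a function of the gap `j = k + 1`. -/
noncomputable def cantorBound (σ : SplittingStructure X) (ε : ℝ) (R j : ℕ) : ℝ :=
  (σ.f R : ℝ) ^ ((j : ℝ) * (1 - ε))

theorem cantorBound_nonneg (σ : SplittingStructure X) (ε : ℝ) (R j : ℕ) :
    0 ≤ σ.cantorBound ε R j := by
  unfold cantorBound; positivity

theorem cantorBound_pow (hR : R ∈ σ.U) (ε : ℝ) (t j : ℕ) :
    σ.cantorBound ε (R ^ t) j = σ.cantorBound ε R (t * j) := by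
  unfold cantorBound
  rw [σ.f_pow hR, Nat.cast_pow, ← Real.rpow_natCast_mul (by positivity)]
  push_cast
  ring_nf

theorem rpow_gap_eq_cantorBound (σ : SplittingStructure X) (ε : ℝ) (R : ℕ) {n k : ℕ}
    (hk : k ≤ n) :
    (σ.f R : ℝ) ^ (((n : ℝ) - ((n - k : ℕ) : ℝ) + 1) * (1 - ε)) = σ.cantorBound ε R (k + 1) := by
  rw [cantorBound, Nat.cast_sub hk]
  push_cast
  ring_nf

theorem cantorWinningOn_iff {ε₀ : ℝ} {B : SSBall X} {E : Set X} :
    σ.CantorWinningOn ε₀ B E ↔ ∀ ε, 0 < ε → ε < ε₀ → ∃ Rε ∈ σ.U, ∀ R ∈ σ.U, Rε ≤ R →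
      ∃ C : σ.CantorScheme B R (σ.cantorBound ε R), C.limit ⊆ E := by
  refine forall₃_congr fun ε _ _ => exists_congr fun Rε => and_congr_right fun _ =>
    forall₃_congr fun R _ _ => ⟨?_, ?_⟩
  · rintro ⟨K, hK, hKE⟩
    obtain ⟨C, rfl⟩ := hK.exists_cantorScheme fun n k hk => (σ.rpow_gap_eq_cantorBound ε R hk).le
    exact ⟨C, hKE⟩
  · rintro ⟨C, hC⟩
    exact ⟨C.limit, C.isGenCantor fun n k hk => (σ.rpow_gap_eq_cantorBound ε R hk).ge, hC⟩

end SplittingStructure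

theorem cantorWinning_countable_inter_general {X : Type*} [MetricSpace X]
    (σ : SplittingStructure X)
    (ε₀ : ℝ)
    (K : ℕ → Set X) (hK : ∀ i, σ.CantorWinning ε₀ (K i)) :
    σ.CantorWinning ε₀ (⋂ i, K i) := by
  intro B
  rw [σ.cantorWinningOn_iff]
  intro ε hε hεε₀
  choose thr _ hrun using fun i B' => σ.cantorWinningOn_iff.1 (hK i B') ε hε hεε₀
  obtain ⟨u, hu, hu₂⟩ := σ.exists_two_le_mem
  refine ⟨u, hu, fun R hR huR => ?_⟩
  let t : ℕ → SSBall X → ℕ := fun i B' => 2 ^ (i + 1) * (thr i B' + 1)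
  have hthr : ∀ i B', thr i B' ≤ R ^ t i B' := fun i B' => calc
    thr i B' ≤ t i B' := (Nat.le_succ _).trans (Nat.le_mul_of_pos_left _ (by positivity))
    _ ≤ 2 ^ t i B' := Nat.lt_two_pow_self.le
    _ ≤ R ^ t i B' := Nat.pow_le_pow_left (hu₂.trans huR) _
  choose run hrunK using fun i B' => hrun i B' _ (σ.pow_mem hR (t i B')) (hthr i B')
  obtain ⟨C, hC⟩ := SplittingStructure.CantorScheme.exists_limit_subset_iUnion_limit hR
    (fun i B' => by positivity) (fun i B' => dvd_mul_right _ _) B run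
    (fun i B' j => (SplittingStructure.cantorBound_pow hR ε _ j).le) (σ.cantorBound_nonneg ε R)
  exact ⟨C, Set.subset_iInter fun i => (hC i).trans (Set.iUnion₂_subset fun B' _ => hrunK i B')⟩

/-- For a nontrivial splitting structure on a complete metric space,
a countable intersection of `ε₀`-Cantor-winning sets is `ε₀`-Cantor-winning. -/
theorem cantorWinning_countable_inter {X : Type*} [MetricSpace X] [CompleteSpace X]
    (σ : SplittingStructure X) (hnt : σ.Nontrivial)
    (ε₀ : ℝ) (hε₀ : 0 < ε₀)
    (K : ℕ → Set X) (hK : ∀ i, σ.CantorWinning ε₀ (K i)) :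
    σ.CantorWinning ε₀ (⋂ i, K i) :=
  cantorWinning_countable_inter_general σ ε₀ K hK
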